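/- arXiv:math/0406171 — 2 statements merged into one kernel-verified Lean document; each statement's English description precedes it below -/
import Mathlib

section
/- In the nef-partition setting, let σ* ⊆ Δ* be a proper face with σ̌ nonempty. Then σ̌_i* = {m ∈ Δ_i | ⟨m,n⟩ = -φ_i(n) for all n ∈ σ*}, i.e., σ̌_i* consists exactly of the points of Δ_i realizing the value of -φ_i on the cone over σ*. -/
/-!
The support functions `φⱼ = supp Dⱼ` are sublinear and add up to `φ = supp Δ`. On the boundary
`φ = 1` of `Δ* = conv E`, `φ` is affine along convex combinations of vertices, hence so is every
`φⱼ`; by the nef condition, `(φⱼ(e))ⱼ` is a standard basis vector at each vertex `e`.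
Consequently `Δᵢ` is cut out by the vertex inequalities `⟨m, e⟩ ≥ -φᵢ(e)`, which say exactly that
`supp ∇ⱼ m ≤ δᵢⱼ` for `∇ⱼ = Nb j = conv ({0} ∪ {e ∈ E | φⱼ(e) = 1})`, and on the proper face `σ*`
every point of `σⱼ*` has `φᵢ = δᵢⱼ`.

Now `m ∈ σ̌ᵢ*` says `∑ⱼ supp ∇ⱼ m ≤ 1` and `supp ∇ᵢ m = 1`, i.e. `supp ∇ⱼ m = δᵢⱼ`, so `m ∈ Δᵢ`.
For `m ∈ Δᵢ` one has `⟨m, ·⟩ ≥ -δᵢⱼ` on `σⱼ*`, so `⟨m, ·⟩ = -1` on `σ̌ = ∑ⱼ σⱼ*` forces equality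
on every `σⱼ*`; as `φᵢ` is affine on `σ*`, this is the condition `⟨m, ·⟩ = -φᵢ` on `σ*`.
-/

open scoped Pointwise

namespace BB

abbrev V (n : ℕ) : Type := Fin n → ℝ

/-- The standard pairing between `M_ℝ` and `N_ℝ` (both identified with `ℝⁿ`). -/
def pair {n : ℕ} (m v : V n) : ℝ := ∑ i, m i * v i

/-- A point of `ℝⁿ` is a lattice point if all its coordinates are integers. -/
def IsLatticePt {n : ℕ} (m : V n) : Prop := ∀ i, ∃ z : ℤ, m i = (z : ℝ)

/-- A lattice polytope: convex hull of finitely many lattice points. -/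
def IsLatticePolytope {n : ℕ} (P : Set (V n)) : Prop :=
  ∃ S : Finset (V n), (∀ m ∈ S, IsLatticePt m) ∧ P = convexHull ℝ (S : Set (V n))

/-- The polar dual `P* = {v | ⟨m,v⟩ ≥ -1 for all m ∈ P}`. -/
def polar {n : ℕ} (P : Set (V n)) : Set (V n) := {v | ∀ m ∈ P, -1 ≤ pair m v}

/-- A reflexive polytope: a lattice polytope with `0` in its interior whose polar
dual is again a lattice polytope. -/
def IsReflexive {n : ℕ} (P : Set (V n)) : Prop :=
  IsLatticePolytope P ∧ (0 : V n) ∈ interior P ∧ IsLatticePolytope (polar P)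

/-- The support function `supp P v = -inf{⟨m,v⟩ | m ∈ P}`; for `P = Δᵢ` and `v ∈ N_ℝ`
this is the piecewise linear function `φᵢ(v)` of the nef-partition. -/
noncomputable def supp {n : ℕ} (P : Set (V n)) (v : V n) : ℝ :=
  sSup ((fun m => -(pair m v)) '' P)

end BB


namespace BB

/-- `F` is a face of the convex set `P` (an exposed subset). -/
def IsFaceOf {n : ℕ} (F P : Set (V n)) : Prop := IsExposed ℝ P F

end BB

/-- Any point of `A` lies on an open segment through the interior point that stays in `A`. -/
lemma IsExtreme.eq_of_mem_interior {E : Type*} [AddCommGroup E] [Module ℝ E]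
    [TopologicalSpace E] [ContinuousSMul ℝ E] [ContinuousSub E] {A B : Set E}
    (hAB : IsExtreme ℝ A B) {x : E} (hxB : x ∈ B) (hx : x ∈ interior A) : B = A := by
  refine Set.Subset.antisymm hAB.1 fun y hy => ?_
  have hlim : Filter.Tendsto (fun b : ℝ => b⁻¹ • (x - (1 - b) • y))
      (nhdsWithin 1 (Set.Iio 1)) (nhds x) := by
    have hcont : ContinuousAt (fun b : ℝ => b⁻¹ • (x - (1 - b) • y)) 1 := by
      fun_prop (disch := norm_num)
    simpa using hcont.tendsto.mono_left nhdsWithin_le_nhds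
  obtain ⟨b, hbA, hb⟩ := ((hlim.eventually (mem_interior_iff_mem_nhds.1 hx)).and
    (Ioo_mem_nhdsLT zero_lt_one)).exists
  refine hAB.2 hy hbA hxB ⟨1 - b, b, by linarith [hb.2], hb.1, by ring, ?_⟩
  rw [smul_smul, mul_inv_cancel₀ hb.1.ne', one_smul, add_sub_cancel]

namespace BB

variable {n : ℕ}

lemma pair_comm (m v : V n) : pair m v = pair v m := dotProduct_comm m v

lemma pair_add_left (m m' v : V n) : pair (m + m') v = pair m v + pair m' v :=
  add_dotProduct m m' v

lemma pair_zero_left (v : V n) : pair 0 v = 0 := zero_dotProduct v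

lemma pair_smul_right (t : ℝ) (m v : V n) : pair m (t • v) = t * pair m v :=
  dotProduct_smul t m v

lemma pair_sum_right {ι : Type*} (s : Finset ι) (m : V n) (v : ι → V n) :
    pair m (∑ j ∈ s, v j) = ∑ j ∈ s, pair m (v j) := dotProduct_sum m s v

lemma pair_sum_smul_right {ι : Type*} (s : Finset ι) (c : ι → ℝ) (m : V n) (v : ι → V n) :
    pair m (∑ j ∈ s, c j • v j) = ∑ j ∈ s, c j * pair m (v j) := by
  simp only [pair_sum_right, pair_smul_right]

lemma pair_self_pos {v : V n} (hv : v ≠ 0) : 0 < pair v v :=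
  lt_of_le_of_ne (Finset.sum_nonneg fun i _ => mul_self_nonneg (v i))
    (Ne.symm (dotProduct_self_eq_zero.not.2 hv))

lemma isLinearMap_pair_left (v : V n) : IsLinearMap ℝ fun m : V n => pair m v :=
  ⟨fun a b => add_dotProduct a b v, fun t m => smul_dotProduct t m v⟩

lemma continuous_pair_left (v : V n) : Continuous fun m : V n => pair m v :=
  continuous_id.dotProduct continuous_const

lemma continuous_pair_right (m : V n) : Continuous fun v : V n => pair m v :=
  continuous_const.dotProduct continuous_id

section Support

variable {P : Set (V n)}

lemma isCompact_image_neg_pair (hP : IsCompact P) (v : V n) :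
    IsCompact ((fun m => -pair m v) '' P) :=
  hP.image (continuous_pair_left v).neg

lemma bddAbove_image_neg_pair (hP : IsCompact P) (v : V n) :
    BddAbove ((fun m => -pair m v) '' P) :=
  (isCompact_image_neg_pair hP v).bddAbove

lemma neg_supp_le_pair (hP : IsCompact P) {m : V n} (hm : m ∈ P) (v : V n) :
    -supp P v ≤ pair m v :=
  neg_le.1 (le_csSup (bddAbove_image_neg_pair hP v) (Set.mem_image_of_mem _ hm))

lemma exists_pair_eq_neg_supp (hP : IsCompact P) (hne : P.Nonempty) (v : V n) :
    ∃ m ∈ P, pair m v = -supp P v := by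
  obtain ⟨m, hm, hmax⟩ :=
    (isCompact_image_neg_pair hP v).sSup_mem (hne.image _)
  exact ⟨m, hm, by rw [supp, ← hmax, neg_neg]⟩

lemma supp_le_iff (hP : IsCompact P) (hne : P.Nonempty) {v : V n} {c : ℝ} :
    supp P v ≤ c ↔ ∀ m ∈ P, -pair m v ≤ c := by
  rw [supp, csSup_le_iff (bddAbove_image_neg_pair hP v) (hne.image _), Set.forall_mem_image]

lemma mem_polar_iff_supp_le_one (hP : IsCompact P) (hne : P.Nonempty) {v : V n} :
    v ∈ polar P ↔ supp P v ≤ 1 := by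
  rw [supp_le_iff hP hne]
  exact forall₂_congr fun _ _ => neg_le

lemma supp_smul (P : Set (V n)) (v : V n) {t : ℝ} (ht : 0 ≤ t) :
    supp P (t • v) = t * supp P v := by
  rw [supp, supp, ← smul_eq_mul, ← Real.sSup_smul_of_nonneg ht, ← Set.image_smul,
    Set.image_image]
  simp only [pair_smul_right, smul_eq_mul, mul_neg]

lemma supp_sum_smul_le (hP : IsCompact P) (hne : P.Nonempty) {ι : Type*} (s : Finset ι)
    {c : ι → ℝ} (hc : ∀ j ∈ s, 0 ≤ c j) (v : ι → V n) :
    supp P (∑ j ∈ s, c j • v j) ≤ ∑ j ∈ s, c j * supp P (v j) := by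
  refine (supp_le_iff hP hne).2 fun m hm => ?_
  rw [pair_sum_smul_right, ← Finset.sum_neg_distrib]
  refine Finset.sum_le_sum fun j hj => ?_
  rw [← mul_neg]
  exact mul_le_mul_of_nonneg_left (neg_le.1 (neg_supp_le_pair hP hm (v j))) (hc j hj)

lemma isLUB_finsetSum {ι : Type*} (s : Finset ι) {T : ι → Set ℝ} {c : ι → ℝ}
    (h : ∀ j ∈ s, IsLUB (T j) (c j)) : IsLUB (∑ j ∈ s, T j) (∑ j ∈ s, c j) := by
  classical
  induction s using Finset.induction_on with
  | empty => exact isLUB_singleton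
  | insert j s hj ih =>
    rw [Finset.sum_insert hj, Finset.sum_insert hj]
    exact (h j (s.mem_insert_self j)).add (ih fun k hk => h k (Finset.mem_insert_of_mem hk))

lemma isLUB_image_neg_pair_sum {ι : Type*} (s : Finset ι) {A : ι → Set (V n)}
    (hA : ∀ j, IsCompact (A j)) (hne : ∀ j, (A j).Nonempty) (v : V n) :
    IsLUB ((fun m => -pair m v) '' ∑ j ∈ s, A j) (∑ j ∈ s, supp (A j) v) := by
  let f : V n →+ ℝ :=
    { toFun := fun m => -pair m v
      map_zero' := by simp [pair_zero_left]
      map_add' := fun a b => by simp only [pair_add_left, neg_add] }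
  rw [show (fun m => -pair m v) '' ∑ j ∈ s, A j = ∑ j ∈ s, (fun m => -pair m v) '' A j from
    Set.image_finsetSum f s A]
  exact isLUB_finsetSum s fun j _ =>
    isLUB_csSup ((hne j).image _) (bddAbove_image_neg_pair (hA j) v)

lemma supp_sum {ι : Type*} (s : Finset ι) {A : ι → Set (V n)} (hA : ∀ j, IsCompact (A j))
    (hne : ∀ j, (A j).Nonempty) (v : V n) :
    supp (∑ j ∈ s, A j) v = ∑ j ∈ s, supp (A j) v :=
  (isLUB_image_neg_pair_sum s hA hne v).csSup_eq <| Set.Nonempty.image _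
    ⟨_, Set.finsetSum_mem_finsetSum s A (fun j => (hne j).some) fun j _ => (hne j).some_mem⟩

lemma mem_polar_sum_iff {ι : Type*} (s : Finset ι) {A : ι → Set (V n)}
    (hA : ∀ j, IsCompact (A j)) (hne : ∀ j, (A j).Nonempty) {v : V n} :
    v ∈ polar (∑ j ∈ s, A j) ↔ ∑ j ∈ s, supp (A j) v ≤ 1 := by
  rw [isLUB_le_iff (isLUB_image_neg_pair_sum s hA hne v), mem_upperBounds,
    Set.forall_mem_image]
  exact forall₂_congr fun _ _ => neg_le.symm

lemma mem_of_forall_exists_pair_le (hPc : IsClosed P) (hP : Convex ℝ P) {m : V n}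
    (h : ∀ v, ∃ x ∈ P, pair x v ≤ pair m v) : m ∈ P := by
  by_contra hm
  obtain ⟨f, u, hfm, hfP⟩ := geometric_hahn_banach_point_closed hP hPc hm
  have hf : ∀ x : V n, f x = pair x fun i => f (Pi.single i 1) := fun x => by
    simp only [pair, ← smul_eq_mul, ← map_smul, ← map_sum]
    congr 1
    exact (pi_eq_sum_univ' x)
  obtain ⟨x, hx, hle⟩ := h fun i => f (Pi.single i 1)
  have := hfP x hx
  rw [hf] at this hfm
  linarith

lemma mem_iff_forall_neg_supp_le (hP : IsCompact P) (hconv : Convex ℝ P) (hne : P.Nonempty)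
    {m : V n} : m ∈ P ↔ ∀ v, -supp P v ≤ pair m v := by
  refine ⟨fun hm v => neg_supp_le_pair hP hm v, fun h => ?_⟩
  refine mem_of_forall_exists_pair_le hP.isClosed hconv fun v => ?_
  obtain ⟨x, hx, hxv⟩ := exists_pair_eq_neg_supp hP hne v
  exact ⟨x, hx, hxv ▸ h v⟩

lemma supp_pos (hP : IsCompact P) (h0 : (0 : V n) ∈ interior P) {v : V n} (hv : v ≠ 0) :
    0 < supp P v := by
  have hlim : Filter.Tendsto (fun t : ℝ => -t • v) (nhdsWithin 0 (Set.Ioi 0)) (nhds 0) := by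
    have : Filter.Tendsto (fun t : ℝ => -t • v) (nhds 0) (nhds ((-0 : ℝ) • v)) :=
      (continuous_neg.smul continuous_const).tendsto 0
    rw [neg_zero, zero_smul] at this
    exact this.mono_left nhdsWithin_le_nhds
  obtain ⟨t, htP, ht⟩ := ((hlim.eventually (mem_interior_iff_mem_nhds.1 h0)).and
    self_mem_nhdsWithin).exists
  have hsupp := neg_supp_le_pair hP htP v
  rw [pair_comm, pair_smul_right] at hsupp
  have ht : (0 : ℝ) < t := ht
  nlinarith [pair_self_pos hv]

lemma supp_zero (P : Set (V n)) : supp P 0 = 0 := by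
  simpa using supp_smul P (0 : V n) le_rfl

lemma supp_nonneg (hP : IsCompact P) (h0 : (0 : V n) ∈ P) (v : V n) :
    0 ≤ supp P v := by
  simpa [pair_zero_left] using neg_supp_le_pair hP h0 v

end Support

lemma IsLatticePolytope.isCompact {P : Set (V n)} (hP : IsLatticePolytope P) : IsCompact P := by
  obtain ⟨S, -, rfl⟩ := hP
  exact S.finite_toSet.isCompact_convexHull (𝕜 := ℝ)

lemma IsLatticePolytope.convex {P : Set (V n)} (hP : IsLatticePolytope P) : Convex ℝ P := by
  obtain ⟨S, -, rfl⟩ := hP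
  exact convex_convexHull ℝ _

lemma polar_convexHull (S : Set (V n)) : polar (convexHull ℝ S) = polar S := by
  refine Set.Subset.antisymm (fun v hv m hm => hv m (subset_convexHull ℝ S hm)) fun v hv => ?_
  exact convexHull_min hv (convex_halfSpace_ge (isLinearMap_pair_left v) (-1))

lemma mem_interior_polar {S : Set (V n)} (hS : S.Finite) {v : V n}
    (hv : ∀ m ∈ S, -1 < pair m v) : v ∈ interior (polar S) := by
  refine mem_interior.2 ⟨⋂ m ∈ S, {u | -1 < pair m u}, fun u hu m hm => ?_, ?_, ?_⟩
  · exact (Set.mem_iInter₂.1 hu m hm).le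
  · exact hS.isOpen_biInter fun m _ => isOpen_lt continuous_const (continuous_pair_right m)
  · exact Set.mem_iInter₂.2 hv

lemma supp_convexHull_le_iff {S : Set (V n)} (hS : S.Finite) (hne : S.Nonempty) {v : V n}
    {c : ℝ} : supp (convexHull ℝ S) v ≤ c ↔ ∀ m ∈ S, -pair m v ≤ c := by
  rw [supp_le_iff (hS.isCompact_convexHull (𝕜 := ℝ)) (hne.mono (subset_convexHull ℝ S))]
  refine ⟨fun h m hm => h m (subset_convexHull ℝ S hm), fun h => ?_⟩
  have hhalf : Convex ℝ {m : V n | -c ≤ pair m v} :=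
    convex_halfSpace_ge (isLinearMap_pair_left v) (-c)
  exact fun m hm => neg_le.1 (convexHull_min (fun x hx => neg_le.1 (h x hx)) hhalf hm)

lemma eq_convexHull_of_extremePoints_eq {B : Set (V n)} (hB : IsCompact B) (hconv : Convex ℝ B)
    {F : Finset (V n)} (hF : B.extremePoints ℝ = F) : B = convexHull ℝ (F : Set (V n)) := by
  rw [← closure_convexHull_extremePoints hB hconv, hF,
    (F.finite_toSet.isCompact_convexHull (𝕜 := ℝ)).isClosed.closure_eq]

/-- Where `supp P < 1` the polar is a neighbourhood, and a proper extreme subset contains no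
interior point. -/
lemma supp_eq_one_of_mem_isExtreme {S : Set (V n)} (hS : S.Finite) (hne : S.Nonempty)
    {B : Set (V n)} (hB : IsExtreme ℝ (polar (convexHull ℝ S)) B)
    (hBne : B ≠ polar (convexHull ℝ S)) {v : V n} (hv : v ∈ B) :
    supp (convexHull ℝ S) v = 1 := by
  have hP := hS.isCompact_convexHull (𝕜 := ℝ)
  have hPne := hne.mono (subset_convexHull ℝ S)
  refine le_antisymm ((mem_polar_iff_supp_le_one hP hPne).1 (hB.1 hv)) (not_lt.1 fun hlt => ?_)
  refine hBne (hB.eq_of_mem_interior hv ?_)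
  rw [polar_convexHull]
  refine mem_interior_polar hS fun m hm => ?_
  linarith [neg_supp_le_pair hP (subset_convexHull ℝ S hm) v]

lemma supp_eq_one_of_mem_extremePoints {S : Set (V n)} (hS : S.Finite) (hne : S.Nonempty)
    {B : Set (V n)} (hB : B ⊂ polar (convexHull ℝ S)) (hBne : B.Nonempty) {e : V n}
    (he : e ∈ (polar (convexHull ℝ S)).extremePoints ℝ) : supp (convexHull ℝ S) e = 1 :=
  supp_eq_one_of_mem_isExtreme hS hne (isExtreme_singleton.2 he)
    (fun h => hBne.ne_empty (Set.ssubset_singleton_iff.1 (h ▸ hB))) rfl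

lemma sum_smul_mem_convexHull {F : Finset (V n)} {c : V n → ℝ} (hc0 : ∀ e ∈ F, 0 ≤ c e)
    (hc1 : ∑ e ∈ F, c e = 1) {S : Set (V n)} (hS : ∀ e ∈ F, c e ≠ 0 → e ∈ S) :
    ∑ e ∈ F, c e • e ∈ convexHull ℝ S := by
  rw [← Finset.sum_filter_of_ne fun e _ (h : c e • e ≠ 0) => left_ne_zero_of_smul h]
  rw [← Finset.sum_filter_ne_zero] at hc1
  refine (convex_convexHull ℝ S).sum_mem (fun e he => hc0 e (Finset.mem_of_mem_filter e he)) hc1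
    fun e he => subset_convexHull ℝ S ?_
  rw [Finset.mem_filter] at he
  exact hS e he.1 he.2

lemma eq_ite_of_sum_le_one {ι : Type*} [Fintype ι] [DecidableEq ι] {f : ι → ℝ}
    (hf : ∀ j, 0 ≤ f j) (hsum : ∑ j, f j ≤ 1) {k : ι} (hk : f k = 1) (j : ι) :
    f j = if j = k then 1 else 0 := by
  split_ifs with hjk
  · rw [hjk, hk]
  have hrest : ∑ l ∈ Finset.univ.erase k, f l = 0 := by
    refine le_antisymm ?_ (Finset.sum_nonneg fun l _ => hf l)
    linarith [Finset.add_sum_erase Finset.univ f (Finset.mem_univ k)]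
  exact (Finset.sum_eq_zero_iff_of_nonneg fun l _ => hf l).1 hrest j
    (Finset.mem_erase.2 ⟨hjk, Finset.mem_univ j⟩)

lemma exists_eq_ite_of_sum_eq_one {ι : Type*} [Fintype ι] [DecidableEq ι] {f : ι → ℝ}
    (h01 : ∀ j, f j = 0 ∨ f j = 1) (hsum : ∑ j, f j = 1) :
    ∃ k, ∀ j, f j = if j = k then 1 else 0 := by
  obtain ⟨k, -, hk⟩ := Finset.exists_ne_zero_of_sum_ne_zero (hsum.trans_ne one_ne_zero)
  exact ⟨k, eq_ite_of_sum_le_one (fun j => (h01 j).elim ge_of_eq fun h => h ▸ zero_le_one)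
    hsum.le ((h01 k).resolve_left hk)⟩

lemma forall_mem_sum_pair_eq_iff {ι : Type*} [Fintype ι] {T : ι → Set (V n)}
    (hne : (∑ j, T j).Nonempty) {a : ι → ℝ} {m : V n} (hle : ∀ j, ∀ v ∈ T j, a j ≤ pair m v) :
    (∀ v ∈ ∑ j, T j, pair m v = ∑ j, a j) ↔ ∀ j, ∀ v ∈ T j, pair m v = a j := by
  classical
  refine ⟨fun h j v hv => ?_, fun h x hx => ?_⟩
  · obtain ⟨w, hw, -⟩ := (Set.mem_fintype_sum T _).1 hne.some_mem
    have hw' : ∀ k, Function.update w j v k ∈ T k := fun k => by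
      rcases eq_or_ne k j with rfl | hk
      · rwa [Function.update_self]
      · rw [Function.update_of_ne hk]
        exact hw k
    have hsum := h _ ((Set.mem_fintype_sum T _).2 ⟨_, hw', rfl⟩)
    rw [pair_sum_right] at hsum
    have hj := (Finset.sum_eq_sum_iff_of_le fun k _ => hle k _ (hw' k)).1 hsum.symm j
      (Finset.mem_univ j)
    rw [Function.update_self] at hj
    exact hj.symm
  · obtain ⟨w, hw, rfl⟩ := (Set.mem_fintype_sum T x).1 hx
    rw [pair_sum_right]
    exact Finset.sum_congr rfl fun j _ => h j (w j) (hw j)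

section Decomposition

variable {ι : Type*} [Fintype ι] {Δ : Set (V n)} {D : ι → Set (V n)}

/-- Each `supp Dⱼ` is subadditive along the combination while their sum is additive, so none of
them can be strictly subadditive. -/
lemma supp_sum_smul_eq (hD : ∀ j, IsCompact (D j)) (hDne : ∀ j, (D j).Nonempty)
    (hΔ : ∀ v, supp Δ v = ∑ j, supp (D j) v) {F : Finset (V n)} {c : V n → ℝ}
    (hc : ∀ e ∈ F, 0 ≤ c e) (h : supp Δ (∑ e ∈ F, c e • e) = ∑ e ∈ F, c e * supp Δ e)
    (j : ι) : supp (D j) (∑ e ∈ F, c e • e) = ∑ e ∈ F, c e * supp (D j) e := by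
  refine (Finset.sum_eq_sum_iff_of_le fun k _ =>
    supp_sum_smul_le (hD k) (hDne k) F hc fun e => e).1 ?_ j (Finset.mem_univ j)
  rw [← hΔ, h, Finset.sum_comm]
  simp only [hΔ, Finset.mul_sum]

lemma exists_combination_supp_eq (hD : ∀ j, IsCompact (D j)) (hDne : ∀ j, (D j).Nonempty)
    (hΔ : ∀ v, supp Δ v = ∑ j, supp (D j) v) {F : Finset (V n)}
    (hF : ∀ e ∈ F, supp Δ e = 1) {v : V n} (hv : v ∈ convexHull ℝ (F : Set (V n)))
    (hv1 : supp Δ v = 1) :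
    ∃ c : V n → ℝ, (∀ e ∈ F, 0 ≤ c e) ∧ ∑ e ∈ F, c e = 1 ∧ ∑ e ∈ F, c e • e = v ∧
      ∀ j, supp (D j) v = ∑ e ∈ F, c e * supp (D j) e := by
  obtain ⟨c, hc0, hc1, rfl⟩ := Finset.mem_convexHull'.1 hv
  refine ⟨c, hc0, hc1, rfl, supp_sum_smul_eq hD hDne hΔ hc0 ?_⟩
  rw [hv1, Finset.sum_congr rfl fun e he => by rw [hF e he, mul_one], hc1]

/-- `v / supp Δ v` lies on the boundary `supp Δ = 1` of `Δ* = conv E`, where every `supp Dⱼ` is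
affine along convex combinations of `E`. -/
lemma exists_nonneg_combination_supp_eq (hD : ∀ j, IsCompact (D j))
    (hDne : ∀ j, (D j).Nonempty) (hΔc : IsCompact Δ) (h0 : (0 : V n) ∈ interior Δ)
    (hΔ : ∀ v, supp Δ v = ∑ j, supp (D j) v) {E : Finset (V n)}
    (hE : polar Δ = convexHull ℝ (E : Set (V n))) (hE1 : ∀ e ∈ E, supp Δ e = 1) (v : V n) :
    ∃ c : V n → ℝ, (∀ e ∈ E, 0 ≤ c e) ∧ ∑ e ∈ E, c e • e = v ∧
      ∀ j, supp (D j) v = ∑ e ∈ E, c e * supp (D j) e := by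
  rcases eq_or_ne v 0 with rfl | hv
  · exact ⟨0, fun _ _ => le_rfl, by simp, fun j => by simp [supp_zero]⟩
  set t := supp Δ v
  have ht : 0 < t := supp_pos hΔc h0 hv
  have hu1 : supp Δ (t⁻¹ • v) = 1 := by
    rw [supp_smul _ _ (inv_nonneg.2 ht.le), inv_mul_cancel₀ ht.ne']
  have hu : t⁻¹ • v ∈ convexHull ℝ (E : Set (V n)) := by
    rw [← hE, mem_polar_iff_supp_le_one hΔc ⟨0, interior_subset h0⟩, hu1]
  obtain ⟨c, hc0, -, hcv, hcφ⟩ := exists_combination_supp_eq hD hDne hΔ hE1 hu hu1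
  have htv : t • t⁻¹ • v = v := by rw [smul_smul, mul_inv_cancel₀ ht.ne', one_smul]
  refine ⟨fun e => t * c e, fun e he => mul_nonneg ht.le (hc0 e he), ?_, fun j => ?_⟩
  · simp only [mul_smul, ← Finset.smul_sum, hcv, htv]
  · rw [← htv, supp_smul _ _ ht.le, hcφ j, Finset.mul_sum]
    simp only [mul_assoc]

lemma mem_iff_forall_vertex (hD : ∀ j, IsCompact (D j)) (hDne : ∀ j, (D j).Nonempty) {i : ι}
    (hconv : Convex ℝ (D i)) (hΔc : IsCompact Δ) (h0 : (0 : V n) ∈ interior Δ)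
    (hΔ : ∀ v, supp Δ v = ∑ j, supp (D j) v) {E : Finset (V n)}
    (hE : polar Δ = convexHull ℝ (E : Set (V n))) (hE1 : ∀ e ∈ E, supp Δ e = 1) {m : V n} :
    m ∈ D i ↔ ∀ e ∈ E, -supp (D i) e ≤ pair m e := by
  rw [mem_iff_forall_neg_supp_le (hD i) hconv (hDne i)]
  refine ⟨fun h e _ => h e, fun h v => ?_⟩
  obtain ⟨c, hc0, rfl, hc⟩ := exists_nonneg_combination_supp_eq hD hDne hΔc h0 hΔ hE hE1 v
  have := Finset.sum_le_sum fun e he => mul_le_mul_of_nonneg_left (h e he) (hc0 e he)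
  simp only [mul_neg, Finset.sum_neg_distrib] at this
  rw [hc i, pair_sum_smul_right]
  exact this

lemma supp_eq_ite_of_mem_convexHull [DecidableEq ι] (hD : ∀ j, IsCompact (D j))
    (hDne : ∀ j, (D j).Nonempty) (hΔ : ∀ v, supp Δ v = ∑ j, supp (D j) v) {F : Finset (V n)}
    (hF : ∀ e ∈ F, supp Δ e = 1) (hFnn : ∀ e ∈ F, ∀ j, 0 ≤ supp (D j) e) {v : V n}
    (hv : v ∈ convexHull ℝ (F : Set (V n))) (hv1 : supp Δ v = 1) {k : ι}
    (hk : supp (D k) v = 1) (j : ι) : supp (D j) v = if j = k then 1 else 0 := by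
  obtain ⟨c, hc0, -, -, hc⟩ := exists_combination_supp_eq hD hDne hΔ hF hv hv1
  refine eq_ite_of_sum_le_one (f := fun l => supp (D l) v) (fun l => ?_) (hΔ v ▸ hv1.le) hk j
  rw [hc l]
  exact Finset.sum_nonneg fun e he => mul_nonneg (hc0 e he) (hFnn e he l)

/-- `supp Dⱼ` is affine along the combination and at most `1` on `F`, so all the weight sits
where it equals `1`. -/
lemma mem_convexHull_of_supp_eq_one (hD : ∀ j, IsCompact (D j)) (hDne : ∀ j, (D j).Nonempty)
    (hΔ : ∀ v, supp Δ v = ∑ j, supp (D j) v) {F : Finset (V n)} (hF : ∀ e ∈ F, supp Δ e = 1)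
    {j : ι} (hFle : ∀ e ∈ F, supp (D j) e ≤ 1) {v : V n}
    (hv : v ∈ convexHull ℝ (F : Set (V n))) (hv1 : supp Δ v = 1) (hj : supp (D j) v = 1) :
    v ∈ convexHull ℝ {e | e ∈ F ∧ supp (D j) e = 1} := by
  obtain ⟨c, hc0, hc1, rfl, hc⟩ := exists_combination_supp_eq hD hDne hΔ hF hv hv1
  refine sum_smul_mem_convexHull hc0 hc1 fun e he hce => ⟨he, ?_⟩
  have hzero : ∑ e ∈ F, c e * (1 - supp (D j) e) = 0 := by
    simp only [mul_sub, mul_one, Finset.sum_sub_distrib, hc1, ← hc j, hj, sub_self]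
  have hterm := (Finset.sum_eq_zero_iff_of_nonneg fun e he =>
    mul_nonneg (hc0 e he) (sub_nonneg.2 (hFle e he))).1 hzero e he
  linarith [(mul_eq_zero.1 hterm).resolve_left hce]

end Decomposition

lemma forall_vertex_iff_supp_convexHull_le {ι : Type*} [DecidableEq ι] {D : ι → Set (V n)}
    {E : Finset (V n)}
    (hE : ∀ e ∈ E, ∃ k, ∀ j, supp (D j) e = if j = k then 1 else 0) (i : ι) {m : V n} :
    (∀ e ∈ E, -supp (D i) e ≤ pair m e) ↔
      ∀ l, supp (convexHull ℝ ({0} ∪ {e | e ∈ E ∧ supp (D l) e = 1})) m ≤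
        if i = l then 1 else 0 := by
  have hfin : ∀ l, ({0} ∪ {e | e ∈ E ∧ supp (D l) e = 1} : Set (V n)).Finite := fun l =>
    (E.finite_toSet.insert 0).subset fun e he => he.imp id fun he => he.1
  simp only [supp_convexHull_le_iff (hfin _) ⟨0, Or.inl rfl⟩]
  constructor
  · rintro h l x (rfl | ⟨hx, hlx⟩)
    · rw [pair_zero_left, neg_zero]
      split_ifs <;> norm_num
    · obtain ⟨k, hk⟩ := hE x hx
      obtain rfl : l = k := by_contra fun hlk => by simp [hk l, hlk] at hlx
      linarith [h x hx, hk i, pair_comm m x]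
  · intro h e he
    obtain ⟨k, hk⟩ := hE e he
    linarith [h k e (Or.inr ⟨he, by simp [hk k]⟩), hk i, pair_comm m e]

lemma forall_slice_pair_eq_iff {ι : Type*} [DecidableEq ι] {D : ι → Set (V n)} {σs : Set (V n)}
    {F : Finset (V n)} {i : ι}
    (hF : ∀ e ∈ F, e ∈ σs ∧ ∃ k, ∀ j, supp (D j) e = if j = k then 1 else 0)
    (hrep : ∀ v ∈ σs, ∃ c : V n → ℝ,
      ∑ e ∈ F, c e • e = v ∧ supp (D i) v = ∑ e ∈ F, c e * supp (D i) e)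
    (hslice : ∀ j, ∀ v ∈ σs, supp (D j) v = 1 → supp (D i) v = if i = j then 1 else 0)
    {m : V n} :
    (∀ j, ∀ v ∈ {v ∈ σs | supp (D j) v = 1}, pair m v = -if i = j then 1 else 0) ↔
      ∀ v ∈ σs, pair m v = -supp (D i) v := by
  constructor
  · intro h v hv
    obtain ⟨c, rfl, hc⟩ := hrep v hv
    rw [hc, pair_sum_smul_right, ← Finset.sum_neg_distrib]
    refine Finset.sum_congr rfl fun e he => ?_
    obtain ⟨heσ, k, hk⟩ := hF e he
    rw [h k e ⟨heσ, by simp [hk k]⟩, hk i, mul_neg]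
  · rintro h j v ⟨hv, hj⟩
    rw [h v hv, hslice j v hv hj]

lemma mem_polar_sum_and_supp_eq_one_iff {ι : Type*} [Fintype ι] [DecidableEq ι]
    {A : ι → Set (V n)} (hA : ∀ l, IsCompact (A l)) (h0 : ∀ l, (0 : V n) ∈ A l) (i : ι)
    {m : V n} :
    m ∈ polar (∑ l, A l) ∧ supp (A i) m = 1 ↔
      (∀ l, supp (A l) m ≤ if i = l then 1 else 0) ∧ 1 ≤ supp (A i) m := by
  have hnn := fun l => supp_nonneg (hA l) (h0 l) m
  rw [mem_polar_sum_iff _ hA fun l => ⟨0, h0 l⟩]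
  constructor
  · rintro ⟨hsum, hi⟩
    refine ⟨fun l => ?_, hi.ge⟩
    rw [eq_ite_of_sum_le_one hnn hsum hi l]
    rcases eq_or_ne l i with rfl | hl
    · simp
    · simp [hl, hl.symm]
  · rintro ⟨h, hi⟩
    refine ⟨(Finset.sum_le_sum fun l _ => h l).trans_eq (Fintype.sum_ite_eq i _), ?_⟩
    exact le_antisymm (by simpa using h i) hi

lemma sep_polar_sum_eq_sep_of_slices {ι : Type*} [Fintype ι] [DecidableEq ι]
    {D Nb : ι → Set (V n)} {σs : Set (V n)} {i : ι} (hNb : ∀ l, IsCompact (Nb l))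
    (h0Nb : ∀ l, (0 : V n) ∈ Nb l) (hD : IsCompact (D i))
    (hmemD : ∀ m, m ∈ D i ↔ ∀ l, supp (Nb l) m ≤ if i = l then 1 else 0)
    (hslice : ∀ j, ∀ v ∈ σs, supp (D j) v = 1 → supp (D i) v = if i = j then 1 else 0)
    (hsliceNb : {v ∈ σs | supp (D i) v = 1} ⊆ Nb i)
    (hne : (∑ j, {v ∈ σs | supp (D j) v = 1}).Nonempty)
    (hface : ∀ m, (∀ j, ∀ v ∈ {v ∈ σs | supp (D j) v = 1}, pair m v = -if i = j then 1 else 0) ↔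
      ∀ v ∈ σs, pair m v = -supp (D i) v) :
    {m ∈ {m ∈ polar (∑ l, Nb l) | ∀ v ∈ ∑ j, {v ∈ σs | supp (D j) v = 1}, pair m v = -1} |
      supp (Nb i) m = 1} = {m ∈ D i | ∀ v ∈ σs, pair m v = -supp (D i) v} := by
  ext m
  have hchk (hm : m ∈ D i) : (∀ v ∈ ∑ j, {v ∈ σs | supp (D j) v = 1}, pair m v = -1) ↔
      ∀ j, ∀ v ∈ {v ∈ σs | supp (D j) v = 1}, pair m v = -if i = j then 1 else 0 := by
    have hsum : ∑ j, -(if i = j then (1 : ℝ) else 0) = -1 := by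
      rw [Finset.sum_neg_distrib, Fintype.sum_ite_eq]
    rw [← hsum]
    refine forall_mem_sum_pair_eq_iff hne fun j v ⟨hv, hj⟩ => ?_
    rw [← hslice j v hv hj]
    exact neg_supp_le_pair hD hm v
  have hpolar := mem_polar_sum_and_supp_eq_one_iff hNb h0Nb i (m := m)
  simp only [Set.mem_ofPred_eq]
  constructor
  · rintro ⟨⟨hpol, hc⟩, hone⟩
    have hm := (hmemD m).2 (hpolar.1 ⟨hpol, hone⟩).1
    exact ⟨hm, (hface m).1 ((hchk hm).1 hc)⟩
  · rintro ⟨hm, hval⟩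
    have hsl := (hface m).2 hval
    obtain ⟨w, hw, -⟩ := (Set.mem_fintype_sum _ _).1 hne.some_mem
    have hone : 1 ≤ supp (Nb i) m := by
      have := neg_supp_le_pair (hNb i) (hsliceNb (hw i)) m
      rw [pair_comm, hsl i (w i) (hw i), if_pos rfl] at this
      linarith
    obtain ⟨hpol, hone'⟩ := hpolar.2 ⟨(hmemD m).1 hm, hone⟩
    exact ⟨⟨hpol, (hchk hm).2 hsl⟩, hone'⟩

lemma sep_polar_sum_eq_sep_of_face {ι : Type*} [Fintype ι] [DecidableEq ι] {Δ : Set (V n)}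
    {D Nb : ι → Set (V n)} {E F : Finset (V n)} {σs : Set (V n)} {i : ι}
    (hD : ∀ j, IsCompact (D j)) (hDne : ∀ j, (D j).Nonempty)
    (hΔ : ∀ v, supp Δ v = ∑ j, supp (D j) v) (hE1 : ∀ e ∈ E, supp Δ e = 1)
    (hnef : ∀ j, ∀ e ∈ E, supp (D j) e = 0 ∨ supp (D j) e = 1)
    (hmemD : ∀ m, m ∈ D i ↔ ∀ e ∈ E, -supp (D i) e ≤ pair m e)
    (hNb : ∀ l, Nb l = convexHull ℝ ({0} ∪ {e | e ∈ E ∧ supp (D l) e = 1}))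
    (hF : ∀ e ∈ F, e ∈ E ∧ e ∈ σs) (hσF : σs = convexHull ℝ (F : Set (V n)))
    (hσ1 : ∀ v ∈ σs, supp Δ v = 1) (hne : (∑ j, {v ∈ σs | supp (D j) v = 1}).Nonempty) :
    {m ∈ {m ∈ polar (∑ l, Nb l) | ∀ v ∈ ∑ j, {v ∈ σs | supp (D j) v = 1}, pair m v = -1} |
      supp (Nb i) m = 1} = {m ∈ D i | ∀ v ∈ σs, pair m v = -supp (D i) v} := by
  have hgen : ∀ l, ({0} ∪ {e | e ∈ E ∧ supp (D l) e = 1} : Set (V n)).Finite := fun l =>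
    (E.finite_toSet.insert 0).subset fun e he => he.imp id fun he => he.1
  have hNbc (l : ι) : IsCompact (Nb l) := hNb l ▸ (hgen l).isCompact_convexHull (𝕜 := ℝ)
  have h0Nb (l : ι) : (0 : V n) ∈ Nb l := hNb l ▸ subset_convexHull ℝ _ (Or.inl rfl)
  have hEtype (e : V n) (he : e ∈ E) : ∃ k, ∀ j, supp (D j) e = if j = k then 1 else 0 :=
    exists_eq_ite_of_sum_eq_one (hnef · e he) (hΔ e ▸ hE1 e he)
  have hF1 (e : V n) (he : e ∈ F) : supp Δ e = 1 := hE1 e (hF e he).1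
  have hFbounds (e : V n) (he : e ∈ F) (j : ι) : 0 ≤ supp (D j) e ∧ supp (D j) e ≤ 1 := by
    rcases hnef j e (hF e he).1 with h | h <;> simp [h]
  have hmemNb (m : V n) : m ∈ D i ↔ ∀ l, supp (Nb l) m ≤ if i = l then 1 else 0 := by
    rw [hmemD, forall_vertex_iff_supp_convexHull_le hEtype i]
    simp only [hNb]
  have hslice (j : ι) (v : V n) (hv : v ∈ σs) (hj : supp (D j) v = 1) :
      supp (D i) v = if i = j then 1 else 0 :=
    supp_eq_ite_of_mem_convexHull hD hDne hΔ hF1 (fun e he l => (hFbounds e he l).1)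
      (hσF ▸ hv) (hσ1 v hv) hj i
  have hsliceNb : {v ∈ σs | supp (D i) v = 1} ⊆ Nb i := fun v hv => by
    rw [hNb i]
    refine convexHull_mono (fun e (he : e ∈ F ∧ _) => Or.inr ⟨(hF e he.1).1, he.2⟩) ?_
    exact mem_convexHull_of_supp_eq_one hD hDne hΔ hF1 (fun e he => (hFbounds e he i).2)
      (hσF ▸ hv.1) (hσ1 v hv.1) hv.2
  refine sep_polar_sum_eq_sep_of_slices hNbc h0Nb (hD i) hmemNb hslice hsliceNb hne fun m =>
    forall_slice_pair_eq_iff (fun e he => ⟨(hF e he).2, hEtype e (hF e he).1⟩) (fun v hv => ?_)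
      hslice
  obtain ⟨c, -, -, hcv, hc⟩ := exists_combination_supp_eq hD hDne hΔ hF1 (hσF ▸ hv) (hσ1 v hv)
  exact ⟨c, hcv, hc i⟩

theorem stmt4 {n r : ℕ} (Δ : Set (V n)) (D : Fin r → Set (V n))
    (hΔrefl : IsReflexive Δ)
    (hDlat : ∀ i, IsLatticePolytope (D i))
    (hΔ : Δ = ∑ i, D i)
    (E : Finset (V n))
    (hE : (E : Set (V n)) = Set.extremePoints ℝ (polar Δ))
    (hnef : ∀ i, ∀ e ∈ E, supp (D i) e = 0 ∨ supp (D i) e = 1)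
    (Nb : Fin r → Set (V n))
    (hNb : ∀ i, Nb i = convexHull ℝ ({0} ∪ {e : V n | e ∈ E ∧ supp (D i) e = 1}))
    -- a proper face σ* of Δ*
    (σs : Set (V n))
    (hface : IsFaceOf σs (polar Δ))
    (hproper : σs ≠ polar Δ)
    -- σ̌ = σ₁* + ⋯ + σ_r*, assumed nonempty
    (chk : Set (V n))
    (hchkdef : chk = ∑ i, {v ∈ σs | supp (D i) v = 1})
    (hchkne : chk.Nonempty)
    -- σ̌* = {m ∈ ∇* | ⟨m,n⟩ = -1 for all n ∈ σ̌}
    (chks : Set (V n))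
    (hchks : chks = {m ∈ polar (∑ i, Nb i) | ∀ v ∈ chk, pair m v = -1}) :
    -- σ̌ᵢ* consists exactly of the points of Δᵢ realizing -φᵢ on the cone over σ*
    ∀ i, {m ∈ chks | supp (Nb i) m = 1}
      = {m ∈ D i | ∀ v ∈ σs, pair m v = -(supp (D i) v)} := by
  intro i
  classical
  obtain ⟨⟨SΔ, -, rfl⟩, h0, hpolar⟩ := hΔrefl
  have hSΔ : (SΔ : Set (V n)).Finite := SΔ.finite_toSet
  have hSΔne : (SΔ : Set (V n)).Nonempty := convexHull_nonempty_iff.1 ⟨0, interior_subset h0⟩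
  have hDc (j : Fin r) : IsCompact (D j) := (hDlat j).isCompact
  have hDne (j : Fin r) : (D j).Nonempty := by
    obtain ⟨w, hw, -⟩ := (Set.mem_fintype_sum D 0).1 (hΔ ▸ interior_subset h0)
    exact ⟨w j, hw j⟩
  have hsupp (v : V n) : supp (convexHull ℝ (SΔ : Set (V n))) v = ∑ j, supp (D j) v :=
    hΔ ▸ supp_sum _ hDc hDne v
  subst hchks hchkdef
  obtain ⟨w, hw, -⟩ := (Set.mem_fintype_sum _ _).1 hchkne.some_mem
  have hE1 (e : V n) (he : e ∈ E) : supp (convexHull ℝ (SΔ : Set (V n))) e = 1 :=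
    supp_eq_one_of_mem_extremePoints hSΔ hSΔne (hface.subset.ssubset_of_ne hproper)
      ⟨w i, (hw i).1⟩ (hE ▸ he)
  have hpolarE := eq_convexHull_of_extremePoints_eq hpolar.isCompact hpolar.convex hE.symm
  have hσ : σs = convexHull ℝ (E.filter (· ∈ σs) : Set (V n)) :=
    eq_convexHull_of_extremePoints_eq (hface.isCompact hpolar.isCompact)
      (hface.convex hpolar.convex)
      (by rw [hface.isExtreme.extremePoints_eq, ← hE]; ext; simp [and_comm])
  exact sep_polar_sum_eq_sep_of_face hDc hDne hsupp hE1 hnef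
    (fun m => mem_iff_forall_vertex hDc hDne (hDlat i).convex
      (hSΔ.isCompact_convexHull (𝕜 := ℝ)) h0 hsupp hpolarE hE1)
    hNb (fun e he => Finset.mem_filter.1 he) hσ
    (fun v hv => supp_eq_one_of_mem_isExtreme hSΔ hSΔne hface.isExtreme hproper hv) hchkne

end BB
end

section
/- In the setting of Theorem 3.23 (the double Legendre transform): with good data (Σ̃', h̃) for (Σ', h), define ∇̃, ∇̃' as above, the dual function h̃̌(m,l) = -inf{⟨(m,l),(n,l')⟩ | (n,l') ∈ ∇̃ + ∇̃'} on the normal fan of ∇̃ + ∇̃', h̃̌' = h̃̌ - φ̃̌, and Δ̃' = {(m,l) | m ∈ Δ^{h'}, l ≥ h̃̌'(m,1)}. Then for every (n,l) in the support of Σ̃', h̃'(n,l) = -inf{⟨(m,l'),(n,l)⟩ | (m,l') ∈ Δ̃'}; i.e., the transform applied twice recovers h̃'. -/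
open scoped Pointwise

namespace BB

/-- The pairing on `(M_ℝ ⊕ ℝ) × (N_ℝ ⊕ ℝ)`. -/
def pairP {n : ℕ} (p q : V n × ℝ) : ℝ := pair p.1 q.1 + p.2 * q.2

/-- The cone over a set, with vertex the origin. -/
def cone0 {E : Type*} [AddCommMonoid E] [Module ℝ E] (S : Set E) : Set E :=
  {x | ∃ c : ℝ, 0 ≤ c ∧ ∃ s ∈ S, x = c • s}

/-- The support function `-inf{⟨q,p⟩ | q ∈ P}` on `M_ℝ × ℝ` (resp. `N_ℝ × ℝ`). -/
noncomputable def suppP {n : ℕ} (P : Set (V n × ℝ)) (p : V n × ℝ) : ℝ :=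
  sSup ((fun q => -(pairP q p)) '' P)

/-- A good subdivision `Σ̃'` of `Σ̃` (Definition 3.14). -/
def IsGoodSubdiv {n : ℕ} (Δ Q : Set (V n)) (CC : Finset (Set (V n × ℝ))) : Prop :=
  (∀ p : V n × ℝ, 0 ≤ p.2 → ∃ c ∈ CC, p ∈ c) ∧
  (∀ c ∈ CC, Convex ℝ c ∧ ∀ t : ℝ, 0 ≤ t → ∀ x ∈ c, t • x ∈ c) ∧
  (∀ c ∈ CC, ∃ σ τ : Set (V n), σ ⊆ frontier (polar Δ) ∧ τ ⊆ Q ∧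
      c = (cone0 (σ ×ˢ ({0} : Set ℝ)) ∪ {0})
        + (cone0 (τ ×ˢ ({1} : Set ℝ)) ∪ {0}))

/-! `ht'` is convex and homogeneous on the half-space `l ≥ 0`, and the cells of `Σ̃'` split
`ht' (u, 1) = h' z + ht' (q, 1)` with `u = z + q` and `q` in the bounded polytope `Q = ∇^{ȟ'}`.
Hence `h' x ≤ ht' (x, t) + K t` for some constant `K`, so `ht'` extends to a sublinear function
on the whole space, and Hahn–Banach gives a vector `w` supporting `ht'` at `p`; then `-w ∈ Δ̃'`
attains `ht' p`. Conversely, on `Δ^{h'}` the function `h̃̌'(·, 1)` is the support function of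
`∇̃'`, which by the same splitting dominates `-⟨m, u⟩ - ht' (u, 1)` for every `u`; rescaling
gives `-⟨a, p⟩ ≤ ht' p` for every `a ∈ Δ̃'`. -/

section Sublinear

variable {E : Type*} [AddCommGroup E] [Module ℝ E] {f : E → ℝ}

def IsSublinear (f : E → ℝ) : Prop :=
  (∀ c : ℝ, 0 < c → ∀ x, f (c • x) = c * f x) ∧ ∀ x y, f (x + y) ≤ f x + f y

lemma map_add_le_of_convexOn {s : Set E} (hf : ConvexOn ℝ s f)
    (hhom : ∀ c : ℝ, 0 ≤ c → ∀ x ∈ s, f (c • x) = c * f x) {x y : E} (hx : x ∈ s)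
    (hy : y ∈ s) : f (x + y) ≤ f x + f y := by
  have hhalf : (0 : ℝ) ≤ 1 / 2 := by norm_num
  have hmid := hf.2 hx hy hhalf hhalf (by norm_num)
  have hdouble := hhom 2 zero_le_two _ (hf.1 hx hy hhalf hhalf (by norm_num))
  rw [smul_add, smul_smul, smul_smul] at hdouble
  norm_num at hdouble
  simp only [smul_eq_mul] at hmid
  linarith

lemma IsSublinear.of_convexOn (hf : ConvexOn ℝ Set.univ f)
    (hhom : ∀ c : ℝ, 0 ≤ c → ∀ x, f (c • x) = c * f x) : IsSublinear f :=
  ⟨fun c hc x => hhom c hc.le x, fun _ _ =>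
    map_add_le_of_convexOn hf (fun c hc x _ => hhom c hc x) trivial trivial⟩

namespace IsSublinear

lemma map_zero (hf : IsSublinear f) : f 0 = 0 := by
  have h := hf.1 2 zero_lt_two 0
  rw [smul_zero] at h
  linarith

lemma map_smul_of_nonneg (hf : IsSublinear f) {c : ℝ} (hc : 0 ≤ c) (x : E) :
    f (c • x) = c * f x := by
  rcases hc.eq_or_lt with rfl | hc
  · rw [zero_smul, zero_mul, hf.map_zero]
  · exact hf.1 c hc x

lemma mul_le_map_smul (hf : IsSublinear f) (c : ℝ) (x : E) : c * f x ≤ f (c • x) := by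
  rcases le_or_gt 0 c with hc | hc
  · rw [hf.map_smul_of_nonneg hc]
  · have h := hf.2 (c • x) ((-c) • x)
    rw [← add_smul, add_neg_cancel, zero_smul, hf.map_zero,
      hf.map_smul_of_nonneg (neg_nonneg.mpr hc.le)] at h
    linarith

lemma exists_linear_le_eq (hf : IsSublinear f) (p : E) :
    ∃ g : E →ₗ[ℝ] ℝ, (∀ x, g x ≤ f x) ∧ g p = f p := by
  have H : ∀ c : ℝ, c • p = 0 → (RingHom.id ℝ) c • f p = 0 := by
    intro c hc
    rcases smul_eq_zero.mp hc with rfl | rfl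
    · exact zero_smul _ _
    · rw [hf.map_zero, smul_zero]
  obtain ⟨g, hgf, hgN⟩ := exists_extension_of_le_sublinear
    (LinearPMap.mkSpanSingleton' p (f p) H) f hf.1 hf.2 (by
      rintro ⟨x, hx⟩
      obtain ⟨c, rfl⟩ := Submodule.mem_span_singleton.mp hx
      rw [LinearPMap.mkSpanSingleton'_apply]
      exact hf.mul_le_map_smul c p)
  refine ⟨g, hgN, ?_⟩
  exact (hgf ⟨p, Submodule.mem_span_singleton_self p⟩).trans
    (LinearPMap.mkSpanSingleton'_apply_self _ _ _ _)

end IsSublinear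

end Sublinear

section Box

variable {n : ℕ}

lemma pair_eq_dotProduct (m v : V n) : pair m v = m ⬝ᵥ v := rfl

def boxRadius (f : V n → ℝ) (i : Fin n) : ℝ := max (f (Pi.single i 1)) (f (-Pi.single i 1))

lemma abs_le_boxRadius {f : V n → ℝ} {v : V n} (hv : ∀ m, -f m ≤ pair m v) (i : Fin n) :
    |v i| ≤ boxRadius f i := by
  have hpos := hv (Pi.single i 1)
  have hneg := hv (-Pi.single i 1)
  simp only [pair_eq_dotProduct, neg_dotProduct, single_dotProduct, one_mul] at hpos hneg
  rw [abs_le, boxRadius]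
  constructor <;> linarith [le_max_left (f (Pi.single i 1)) (f (-Pi.single i 1)),
    le_max_right (f (Pi.single i 1)) (f (-Pi.single i 1))]

lemma IsSublinear.le_sum_abs_mul_boxRadius {f : V n → ℝ} (hf : IsSublinear f) (y : V n) :
    f y ≤ ∑ i, |y i| * boxRadius f i := by
  have hsplit := Finset.le_sum_of_subadditive f hf.map_zero.le hf.2 Finset.univ
    (fun i => (Pi.single i (y i) : V n))
  rw [Finset.univ_sum_single] at hsplit
  refine hsplit.trans (Finset.sum_le_sum fun i _ => ?_)
  rcases le_or_gt 0 (y i) with hy | hy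
  · have hsingle : (Pi.single i (y i) : V n) = |y i| • Pi.single i 1 := by
      ext j; by_cases h : j = i <;> simp [h, abs_of_nonneg hy]
    rw [hsingle, hf.map_smul_of_nonneg (abs_nonneg _)]
    exact mul_le_mul_of_nonneg_left (le_max_left _ _) (abs_nonneg _)
  · have hsingle : (Pi.single i (y i) : V n) = |y i| • -Pi.single i 1 := by
      ext j; by_cases h : j = i <;> simp [h, abs_of_neg hy]
    rw [hsingle, hf.map_smul_of_nonneg (abs_nonneg _)]
    exact mul_le_mul_of_nonneg_left (le_max_right _ _) (abs_nonneg _)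

lemma IsSublinear.exists_add_map_neg_le {f : V n → ℝ} (hf : IsSublinear f) (g : V n → ℝ) :
    ∃ C, ∀ v, (∀ m, -g m ≤ pair m v) → f v + f (-v) ≤ C := by
  refine ⟨2 * ∑ i, boxRadius g i * |boxRadius f i|, fun v hv => ?_⟩
  have hbound : ∀ y : V n, (∀ i, |y i| ≤ boxRadius g i) →
      f y ≤ ∑ i, boxRadius g i * |boxRadius f i| := fun y hy =>
    (hf.le_sum_abs_mul_boxRadius y).trans <| Finset.sum_le_sum fun i _ =>
      (mul_le_mul_of_nonneg_left (le_abs_self _) (abs_nonneg _)).trans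
        (mul_le_mul_of_nonneg_right (hy i) (abs_nonneg _))
  have hv' := abs_le_boxRadius hv
  linarith [hbound v hv', hbound (-v) fun i => by simpa using hv' i]

end Box

section HalfSpace

variable {E : Type*} {f : E × ℝ → ℝ} {K : ℝ}

def halfSpaceExt (f : E × ℝ → ℝ) (K : ℝ) (p : E × ℝ) : ℝ :=
  f (p.1, max p.2 0) + K * max (-p.2) 0

lemma halfSpaceExt_eq_of_nonneg {p : E × ℝ} (hp : 0 ≤ p.2) : halfSpaceExt f K p = f p := by
  simp [halfSpaceExt, hp]

variable [AddCommGroup E] [Module ℝ E]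

lemma map_mk_eq_mul_map_inv_smul
    (hhom : ∀ c : ℝ, 0 ≤ c → ∀ p : E × ℝ, 0 ≤ p.2 → f (c • p) = c * f p)
    (x : E) {t : ℝ} (ht : 0 < t) : f (x, t) = t * f (t⁻¹ • x, 1) := by
  have hxt : ((x, t) : E × ℝ) = t • (t⁻¹ • x, 1) := by
    ext <;> simp [smul_inv_smul₀ ht.ne']
  rw [hxt, hhom t ht.le _ zero_le_one]

lemma add_mul_le_add_mul_of_le (hconv : ConvexOn ℝ {p : E × ℝ | 0 ≤ p.2} f)
    (hK : ∀ x t, 0 ≤ t → f (x, 0) ≤ f (x, t) + K * t) (x : E) {t t' : ℝ} (ht : 0 ≤ t)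
    (htt' : t ≤ t') :
    f (x, t) + K * t ≤ f (x, t') + K * t' := by
  rcases (ht.trans htt').eq_or_lt with h0 | ht'
  · obtain rfl : t = 0 := le_antisymm (h0 ▸ htt') ht
    rw [← h0]
  set θ := t / t'
  have hθt : θ * t' = t := div_mul_cancel₀ _ ht'.ne'
  have h1θ : 0 ≤ 1 - θ := sub_nonneg.mpr (div_le_one_of_le₀ htt' ht'.le)
  have hpt : ((x, t) : E × ℝ) = (1 - θ) • (x, 0) + θ • (x, t') := by
    ext
    · simp [← add_smul]
    · simp [hθt]
  have hcomb := hconv.2 (x := (x, 0)) (y := (x, t')) (by simp) (by simpa using ht'.le) h1θ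
    (div_nonneg ht ht'.le) (sub_add_cancel 1 θ)
  rw [← hpt, smul_eq_mul, smul_eq_mul] at hcomb
  have hbase := mul_le_mul_of_nonneg_left (hK x t' ht'.le) h1θ
  have hexpand : (1 - θ) * (f (x, t') + K * t') = (1 - θ) * f (x, t') + K * t' - K * t := by
    rw [← hθt]; ring
  linarith

lemma isSublinear_halfSpaceExt (hconv : ConvexOn ℝ {p : E × ℝ | 0 ≤ p.2} f)
    (hK : ∀ x t, 0 ≤ t → f (x, 0) ≤ f (x, t) + K * t)
    (hhom : ∀ c : ℝ, 0 ≤ c → ∀ p : E × ℝ, 0 ≤ p.2 → f (c • p) = c * f p) :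
    IsSublinear (halfSpaceExt f K) := by
  refine ⟨fun c hc p => ?_, fun a b => ?_⟩
  · have hpos : ((c • p).1, max (c • p).2 0) = c • ((p.1, max p.2 0) : E × ℝ) := by
      ext <;> simp [mul_max_of_nonneg _ _ hc.le]
    have hneg : max (-(c • p).2) 0 = c * max (-p.2) 0 := by
      simp [← mul_neg, mul_max_of_nonneg _ _ hc.le]
    rw [halfSpaceExt, halfSpaceExt, hpos, hneg, hhom c hc.le _ (le_max_right _ _)]
    ring
  · have hmono := add_mul_le_add_mul_of_le hconv hK (a.1 + b.1) (le_max_right (a.2 + b.2) 0)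
      (max_le (add_le_add (le_max_left a.2 0) (le_max_left b.2 0))
        (add_nonneg (le_max_right a.2 0) (le_max_right b.2 0)))
    have hsub := map_add_le_of_convexOn hconv hhom (x := (a.1, max a.2 0))
      (y := (b.1, max b.2 0)) (by simp) (by simp)
    have hneg (s : ℝ) : max (-s) 0 = max s 0 - s := by
      linarith [max_zero_sub_max_neg_zero_eq_self s]
    simp only [halfSpaceExt, Prod.fst_add, Prod.snd_add, Prod.mk_add_mk] at hsub ⊢
    rw [hneg, hneg a.2, hneg b.2]
    linarith

/-- Near the boundary `t = 0` a convex homogeneous function on the half-space need not be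
supported by any linear functional; the bound `hK` is what makes it extend to a sublinear
function on the whole space. -/
lemma exists_linear_le_eq_of_halfSpace (hconv : ConvexOn ℝ {p : E × ℝ | 0 ≤ p.2} f)
    (hK : ∀ x t, 0 ≤ t → f (x, 0) ≤ f (x, t) + K * t)
    (hhom : ∀ c : ℝ, 0 ≤ c → ∀ p : E × ℝ, 0 ≤ p.2 → f (c • p) = c * f p)
    {p : E × ℝ} (hp : 0 ≤ p.2) :
    ∃ g : E × ℝ →ₗ[ℝ] ℝ, (∀ q, 0 ≤ q.2 → g q ≤ f q) ∧ g p = f p := by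
  obtain ⟨g, hle, hgp⟩ := (isSublinear_halfSpaceExt hconv hK hhom).exists_linear_le_eq p
  exact ⟨g, fun q hq => (hle q).trans_eq (halfSpaceExt_eq_of_nonneg hq),
    hgp.trans (halfSpaceExt_eq_of_nonneg hp)⟩

end HalfSpace

section Pairing

variable {n : ℕ}

lemma pairP_add_left (a b q : V n × ℝ) : pairP (a + b) q = pairP a q + pairP b q := by
  simp only [pairP, pair_eq_dotProduct, Prod.fst_add, Prod.snd_add, add_dotProduct]
  ring

lemma neg_pairP_neg (w p : V n × ℝ) : -pairP (-w) p = pairP p w := by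
  simp only [pairP, pair_eq_dotProduct, Prod.fst_neg, Prod.snd_neg, neg_dotProduct,
    dotProduct_comm w.1]
  ring

lemma exists_pairP_eq (g : V n × ℝ →ₗ[ℝ] ℝ) : ∃ w : V n × ℝ, ∀ q, g q = pairP q w := by
  refine ⟨(fun i => g (fun j => if i = j then 1 else 0, 0), g (0, 1)), fun q => ?_⟩
  have hsplit : q = LinearMap.inl ℝ (V n) ℝ q.1 + q.2 • ((0, 1) : V n × ℝ) := by
    ext <;> simp
  rw [hsplit, map_add, ← LinearMap.comp_apply, LinearMap.pi_apply_eq_sum_univ, map_smul]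
  simp [pairP, pair]

end Pairing

section GoodSubdiv

variable {E : Type*} [AddCommGroup E] [Module ℝ E]

lemma snd_eq_zero_of_mem_cone0 {σ : Set E} {x : E × ℝ}
    (hx : x ∈ cone0 (σ ×ˢ ({0} : Set ℝ)) ∪ {0}) : x.2 = 0 := by
  rcases hx with ⟨c, -, s, ⟨-, hs⟩, rfl⟩ | rfl
  · simp [show s.2 = 0 from hs]
  · rfl

lemma fst_mem_of_mem_cone0 {τ : Set E} {x : E × ℝ}
    (hx : x ∈ cone0 (τ ×ˢ ({1} : Set ℝ)) ∪ {0}) (h1 : x.2 = 1) : x.1 ∈ τ := by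
  rcases hx with ⟨c, -, s, ⟨hs, hs1⟩, rfl⟩ | rfl
  · have hc : c = 1 := by simpa [show s.2 = 1 from hs1] using h1
    simpa [hc] using hs
  · simp at h1

/-- The cell `cone(σ × 0) + cone(τ × 1)` containing `(u, 1)` splits it as `(z, 0) + (q, 1)`
with `q ∈ τ ⊆ Q`, and a function linear on that cell is additive on the split. -/
lemma IsGoodSubdiv.exists_add_eq {n : ℕ} {Δ Q : Set (V n)} {CC : Finset (Set (V n × ℝ))}
    (hgood : IsGoodSubdiv Δ Q CC) {f : V n × ℝ → ℝ}
    (hlin : ∀ c ∈ CC, ∃ w : V n × ℝ, ∀ p ∈ c, f p = pairP p w) (u : V n) :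
    ∃ z, ∃ q ∈ Q, u = z + q ∧ f (u, 1) = f (z, 0) + f (q, 1) := by
  obtain ⟨c, hc, hu⟩ := hgood.1 (u, 1) zero_le_one
  obtain ⟨σ, τ, -, hτ, rfl⟩ := hgood.2.2 c hc
  obtain ⟨w, hw⟩ := hlin _ hc
  obtain ⟨a, ha, b, hb, hab⟩ := Set.mem_add.mp hu
  have ha2 : a.2 = 0 := snd_eq_zero_of_mem_cone0 ha
  have hb2 : b.2 = 1 := by simpa [ha2] using congrArg Prod.snd hab
  have haC := Set.add_mem_add ha
    (Set.mem_union_right (cone0 (τ ×ˢ ({1} : Set ℝ))) (Set.mem_singleton 0))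
  have hbC := Set.add_mem_add
    (Set.mem_union_right (cone0 (σ ×ˢ ({0} : Set ℝ))) (Set.mem_singleton 0)) hb
  rw [add_zero] at haC
  rw [zero_add] at hbC
  refine ⟨a.1, b.1, hτ (fst_mem_of_mem_cone0 hb hb2), (congrArg Prod.fst hab).symm, ?_⟩
  rw [show ((a.1, 0) : V n × ℝ) = a from Prod.ext rfl ha2.symm,
    show ((b.1, 1) : V n × ℝ) = b from Prod.ext rfl hb2.symm,
    hw _ hu, hw _ haC, hw _ hbC, ← hab, pairP_add_left]

end GoodSubdiv

section Epigraph

variable {n : ℕ}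

/-- `∇̃`, `∇̃'` and `Δ̃'` are all of this form. -/
def epiOver (P : Set (V n)) (g : V n → ℝ) : Set (V n × ℝ) := {p | p.1 ∈ P ∧ g p.1 ≤ p.2}

variable {P : Set (V n)} {g : V n → ℝ} {m : V n} {C : ℝ}

lemma neg_pairP_le_of_mem_epiOver (hC : ∀ v ∈ P, -pair v m - g v ≤ C) {a : V n × ℝ}
    (ha : a ∈ epiOver P g) : -pairP a (m, 1) ≤ C := by
  have := hC a.1 ha.1
  simp only [pairP, mul_one]
  linarith [ha.2]

lemma bddAbove_epiOver (hC : ∀ v ∈ P, -pair v m - g v ≤ C) :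
    BddAbove ((fun q => -pairP q (m, 1)) '' epiOver P g) :=
  ⟨C, Set.forall_mem_image.2 fun _ ha => neg_pairP_le_of_mem_epiOver hC ha⟩

lemma suppP_epiOver_le (hP : P.Nonempty) (hC : ∀ v ∈ P, -pair v m - g v ≤ C) :
    suppP (epiOver P g) (m, 1) ≤ C := by
  obtain ⟨v, hv⟩ := hP
  exact csSup_le ⟨_, Set.mem_image_of_mem _ (⟨hv, le_rfl⟩ : (v, g v) ∈ epiOver P g)⟩
    (Set.forall_mem_image.2 fun _ ha => neg_pairP_le_of_mem_epiOver hC ha)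

lemma le_suppP_epiOver (hC : ∀ v ∈ P, -pair v m - g v ≤ C) {v : V n} (hv : v ∈ P) :
    -pair v m - g v ≤ suppP (epiOver P g) (m, 1) :=
  le_csSup (bddAbove_epiOver hC) ⟨(v, g v), ⟨hv, le_rfl⟩, by simp only [pairP]; ring⟩

lemma suppP_add {A B : Set (V n × ℝ)} {q : V n × ℝ} (hA : A.Nonempty) (hB : B.Nonempty)
    (hA' : BddAbove ((fun x => -pairP x q) '' A)) (hB' : BddAbove ((fun x => -pairP x q) '' B)) :
    suppP (A + B) q = suppP A q + suppP B q := by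
  have himage := Set.image_add
    (AddMonoidHom.mk' (fun x => -pairP x q) fun a b => by rw [pairP_add_left]; ring)
    (s := A) (t := B)
  exact (congrArg sSup himage).trans (csSup_add (hA.image _) hA' (hB.image _) hB')

end Epigraph

section DoubleTransform

variable {n : ℕ} {h' : V n → ℝ} {ht' : V n × ℝ → ℝ} {Q : Set (V n)} {K : ℝ}

/-- Since `ht'` splits as `h' z + ht' (q, 1)` with `q` in the bounded set `Q`, the gap
`h' u - ht' (u, 1)` is at most its (bounded) value at some `q ∈ Q`. -/
lemma exists_sub_le_of_forall_exists_add_eq (hh' : IsSublinear h')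
    (htconv : ConvexOn ℝ {p : V n × ℝ | 0 ≤ p.2} ht')
    (hthom : ∀ c : ℝ, 0 ≤ c → ∀ p : V n × ℝ, 0 ≤ p.2 → ht' (c • p) = c * ht' p)
    (htrest : ∀ x, ht' (x, 0) = h' x)
    (hdec : ∀ u, ∃ z, ∃ q ∈ Q, u = z + q ∧ ht' (u, 1) = h' z + ht' (q, 1))
    {C : ℝ} (hC : ∀ q ∈ Q, h' q + h' (-q) ≤ C) :
    ∃ K, ∀ u, h' u - ht' (u, 1) ≤ K := by
  refine ⟨C - ht' (0, 1), fun u => ?_⟩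
  obtain ⟨z, q, hq, rfl, hsplit⟩ := hdec u
  have hbase := map_add_le_of_convexOn htconv (fun c hc p hp => hthom c hc p hp)
    (x := (q, 1)) (y := (-q, 0)) (by simp) (by simp)
  rw [Prod.mk_add_mk, add_neg_cancel, add_zero, htrest] at hbase
  linarith [hh'.2 z q, hC q hq]

lemma le_add_mul_of_sub_le (hh' : IsSublinear h')
    (hthom : ∀ c : ℝ, 0 ≤ c → ∀ p : V n × ℝ, 0 ≤ p.2 → ht' (c • p) = c * ht' p)
    (htrest : ∀ x, ht' (x, 0) = h' x) (hK : ∀ u, h' u - ht' (u, 1) ≤ K) (x : V n) {t : ℝ}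
    (ht : 0 ≤ t) : ht' (x, 0) ≤ ht' (x, t) + K * t := by
  rcases ht.eq_or_lt with rfl | ht
  · simp
  rw [htrest, map_mk_eq_mul_map_inv_smul hthom x ht]
  conv_lhs => rw [← smul_inv_smul₀ ht.ne' x, hh'.1 t ht]
  nlinarith [hK (t⁻¹ • x)]

lemma exists_support_vector (htconv : ConvexOn ℝ {p : V n × ℝ | 0 ≤ p.2} ht')
    (hthom : ∀ c : ℝ, 0 ≤ c → ∀ p : V n × ℝ, 0 ≤ p.2 → ht' (c • p) = c * ht' p)
    (hK : ∀ x t, 0 ≤ t → ht' (x, 0) ≤ ht' (x, t) + K * t) {p : V n × ℝ} (hp : 0 ≤ p.2) :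
    ∃ w, (∀ q, 0 ≤ q.2 → pairP q w ≤ ht' q) ∧ pairP p w = ht' p := by
  obtain ⟨g, hgle, hgp⟩ := exists_linear_le_eq_of_halfSpace htconv hK hthom hp
  obtain ⟨w, hw⟩ := exists_pairP_eq g
  exact ⟨w, fun q hq => hw q ▸ hgle q hq, hw p ▸ hgp⟩

variable {m : V n}

lemma neg_pair_sub_le (hm : ∀ x, -h' x ≤ pair m x) (hK : ∀ u, h' u - ht' (u, 1) ≤ K) (v : V n) :
    -pair v m - ht' (v, 1) ≤ K := by
  rw [pair_comm]
  linarith [hm v, hK v]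

lemma neg_pair_sub_le_suppP (hm : ∀ x, -h' x ≤ pair m x) (hK : ∀ u, h' u - ht' (u, 1) ≤ K)
    (hdec : ∀ u, ∃ z, ∃ q ∈ Q, u = z + q ∧ ht' (u, 1) = h' z + ht' (q, 1)) (u : V n) :
    -pair m u - ht' (u, 1) ≤ suppP (epiOver Q fun v => ht' (v, 1)) (m, 1) := by
  obtain ⟨z, q, hq, rfl, hsplit⟩ := hdec u
  have hq' := le_suppP_epiOver (fun v _ => neg_pair_sub_le hm hK v) hq
  rw [pair_comm] at hq'
  rw [hsplit, pair_eq_dotProduct, dotProduct_add, ← pair_eq_dotProduct, ← pair_eq_dotProduct]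
  linarith [hm z]

lemma suppP_add_sub_suppP {P : Set (V n)} (hP : (0 : V n) ∈ P) (hh' : IsSublinear h')
    (hm : ∀ x, -h' x ≤ pair m x) (hK : ∀ u, h' u - ht' (u, 1) ≤ K) (hQ : Q.Nonempty) :
    suppP (epiOver P h' + epiOver Q fun v => ht' (v, 1)) (m, 1) - suppP (epiOver P h') (m, 1)
      = suppP (epiOver Q fun v => ht' (v, 1)) (m, 1) := by
  have hPm : ∀ v ∈ P, -pair v m - h' v ≤ 0 := fun v _ => by
    rw [pair_comm]
    linarith [hm v]
  have hPne : (epiOver P h').Nonempty := ⟨(0, 0), hP, hh'.map_zero.le⟩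
  obtain ⟨q, hq⟩ := hQ
  have hQne : (epiOver Q fun v => ht' (v, 1)).Nonempty := ⟨(q, ht' (q, 1)), hq, le_rfl⟩
  rw [suppP_add hPne hQne (bddAbove_epiOver hPm)
    (bddAbove_epiOver fun v _ => neg_pair_sub_le hm hK v), add_sub_cancel_left]

lemma neg_pairP_le_of_suppP_le
    (hthom : ∀ c : ℝ, 0 ≤ c → ∀ p : V n × ℝ, 0 ≤ p.2 → ht' (c • p) = c * ht' p)
    (htrest : ∀ x, ht' (x, 0) = h' x)
    (hdec : ∀ u, ∃ z, ∃ q ∈ Q, u = z + q ∧ ht' (u, 1) = h' z + ht' (q, 1))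
    (hm : ∀ x, -h' x ≤ pair m x) (hK : ∀ u, h' u - ht' (u, 1) ≤ K) {l : ℝ}
    (hl : suppP (epiOver Q fun v => ht' (v, 1)) (m, 1) ≤ l) {p : V n × ℝ} (hp : 0 ≤ p.2) :
    -pairP (m, l) p ≤ ht' p := by
  obtain ⟨x, t⟩ := p
  simp only [pairP] at hp ⊢
  rcases hp.eq_or_lt with rfl | ht
  · rw [htrest, mul_zero, add_zero]
    exact neg_le.mp (hm x)
  have hu := neg_pair_sub_le_suppP hm hK hdec (t⁻¹ • x)
  rw [map_mk_eq_mul_map_inv_smul hthom x ht]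
  conv_lhs => rw [← smul_inv_smul₀ ht.ne' x, pair_eq_dotProduct, dotProduct_smul,
    ← pair_eq_dotProduct, smul_eq_mul]
  nlinarith

variable {w : V n × ℝ}

lemma neg_le_pair_neg_fst (htrest : ∀ x, ht' (x, 0) = h' x)
    (hw : ∀ q, 0 ≤ q.2 → pairP q w ≤ ht' q) (x : V n) : -h' x ≤ pair (-w).1 x := by
  have := hw (x, 0) le_rfl
  simp only [pairP, htrest] at this
  rw [Prod.fst_neg, pair_eq_dotProduct, neg_dotProduct, dotProduct_comm, ← pair_eq_dotProduct]
  linarith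

lemma suppP_epiOver_le_neg_snd (hQ : Q.Nonempty) (hw : ∀ q, 0 ≤ q.2 → pairP q w ≤ ht' q) :
    suppP (epiOver Q fun v => ht' (v, 1)) ((-w).1, 1) ≤ (-w).2 := by
  refine suppP_epiOver_le hQ fun v _ => ?_
  have := hw (v, 1) zero_le_one
  simp only [pairP] at this
  rw [Prod.fst_neg, Prod.snd_neg, pair_eq_dotProduct, dotProduct_neg, ← pair_eq_dotProduct]
  linarith

end DoubleTransform

theorem stmt17_general {n r : ℕ} (Δ : Set (V n)) (D : Fin r → Set (V n))
    (E : Finset (V n))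
    (Nb : Fin r → Set (V n))
    (hNb : ∀ i, Nb i = convexHull ℝ ({0} ∪ {e : V n | e ∈ E ∧ supp (D i) e = 1}))
    -- ȟ' = ȟ - φ̌ convex positively homogeneous with Newton polytope Q = ∇^{ȟ'}
    (hk : V n → ℝ)
    (Q : Set (V n)) (hQ : Q = {v : V n | ∀ m, -(hk m) ≤ pair m v})
    -- h' = h - φ convex positively homogeneous, with Newton polytope Δ^{h'}
    (h' : V n → ℝ)
    (h'conv : ConvexOn ℝ Set.univ h')
    (h'hom : ∀ c : ℝ, 0 ≤ c → ∀ x, h' (c • x) = c * h' x)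
    (Dh' : Set (V n)) (hDh' : Dh' = {m : V n | ∀ x, -(h' x) ≤ pair m x})
    -- the good pair (Σ̃', h̃) for (Σ', h), with h̃' = h̃ - φ̃
    (CC : Finset (Set (V n × ℝ)))
    (hgood : IsGoodSubdiv Δ Q CC)
    (ht' : V n × ℝ → ℝ)
    (htconv : ConvexOn ℝ {p : V n × ℝ | 0 ≤ p.2} ht')
    (hthom : ∀ c : ℝ, 0 ≤ c → ∀ p : V n × ℝ, 0 ≤ p.2 → ht' (c • p) = c * ht' p)
    (htrest : ∀ x, ht' (x, 0) = h' x)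
    (htlin : ∀ c ∈ CC, ∃ w : V n × ℝ, ∀ p ∈ c, ht' p = pairP p w)
    -- ∇̃ = {(n,l) | n ∈ ∇, l ≥ h'(n)} and ∇̃' = {(n,l) | n ∈ ∇^{ȟ'}, l ≥ h̃'(n,1)}
    (Ntil Ntil' : Set (V n × ℝ))
    (hNtil : Ntil = {p : V n × ℝ | p.1 ∈ (∑ i, Nb i) ∧ h' p.1 ≤ p.2})
    (hNtil' : Ntil' = {p : V n × ℝ | p.1 ∈ Q ∧ ht' (p.1, 1) ≤ p.2})
    -- the dual function h̃̌(m,l) = -inf{⟨(m,l),(n,l')⟩ | (n,l') ∈ ∇̃ + ∇̃'},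
    -- and h̃̌' = h̃̌ - φ̃̌, where φ̃̌ is the support function of ∇̃
    (htc htc' : V n × ℝ → ℝ)
    (hhtc : ∀ q, htc q = suppP (Ntil + Ntil') q)
    (hhtc' : ∀ q, htc' q = htc q - suppP Ntil q)
    -- Δ̃' = {(m,l) | m ∈ Δ^{h'}, l ≥ h̃̌'(m,1)}
    (Δt' : Set (V n × ℝ))
    (hΔt' : Δt' = {p : V n × ℝ | p.1 ∈ Dh' ∧ htc' (p.1, 1) ≤ p.2}) :
    -- the transform applied twice recovers h̃' on the support of Σ̃'
    ∀ p : V n × ℝ, 0 ≤ p.2 → ht' p = suppP Δt' p := by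
  intro p hp
  subst hNtil hNtil' hΔt' hDh'
  have hh' := IsSublinear.of_convexOn h'conv h'hom
  have hdec (u : V n) : ∃ z, ∃ q ∈ Q, u = z + q ∧ ht' (u, 1) = h' z + ht' (q, 1) := by
    simpa only [htrest] using hgood.exists_add_eq htlin u
  obtain ⟨C, hC⟩ := hh'.exists_add_map_neg_le hk
  obtain ⟨K, hK⟩ := exists_sub_le_of_forall_exists_add_eq hh' htconv hthom htrest hdec
    (C := C) fun q hq => hC q (by rwa [hQ] at hq)
  obtain ⟨w, hwle, hwp⟩ :=
    exists_support_vector htconv hthom (le_add_mul_of_sub_le hh' hthom htrest hK) hp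
  have hNb0 : (0 : V n) ∈ ∑ i, Nb i := by
    simpa using Set.finsetSum_mem_finsetSum Finset.univ Nb (fun _ => 0)
      fun i _ => hNb i ▸ subset_convexHull ℝ _ (Or.inl rfl)
  have hQne : Q.Nonempty := let ⟨_, q, hq, _⟩ := hdec 0; ⟨q, hq⟩
  have hdual (m : V n) (hm : ∀ x, -h' x ≤ pair m x) :
      htc' (m, 1) = suppP (epiOver Q fun v => ht' (v, 1)) (m, 1) := by
    rw [hhtc', hhtc]
    exact suppP_add_sub_suppP hNb0 hh' hm hK hQne
  have hw := neg_le_pair_neg_fst htrest hwle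
  symm
  refine IsGreatest.csSup_eq ⟨⟨-w, ⟨hw, ?_⟩, (neg_pairP_neg w p).trans hwp⟩, ?_⟩
  · rw [hdual _ hw]
    exact suppP_epiOver_le_neg_snd hQne hwle
  · rintro _ ⟨a, ⟨ha₁, ha₂⟩, rfl⟩
    exact neg_pairP_le_of_suppP_le hthom htrest hdec ha₁ hK ((hdual _ ha₁).symm.trans_le ha₂) hp

theorem stmt17 {n r : ℕ} (Δ : Set (V n)) (D : Fin r → Set (V n))
    (hΔrefl : IsReflexive Δ)
    (hDlat : ∀ i, IsLatticePolytope (D i))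
    (hΔ : Δ = ∑ i, D i)
    (E : Finset (V n))
    (hE : (E : Set (V n)) = Set.extremePoints ℝ (polar Δ))
    (hnef : ∀ i, ∀ e ∈ E, supp (D i) e = 0 ∨ supp (D i) e = 1)
    (Nb : Fin r → Set (V n))
    (hNb : ∀ i, Nb i = convexHull ℝ ({0} ∪ {e : V n | e ∈ E ∧ supp (D i) e = 1}))
    -- ȟ' = ȟ - φ̌ convex positively homogeneous with Newton polytope Q = ∇^{ȟ'}
    (hk : V n → ℝ)
    (hkconv : ConvexOn ℝ Set.univ hk)
    (hkhom : ∀ c : ℝ, 0 ≤ c → ∀ x, hk (c • x) = c * hk x)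
    (Q : Set (V n)) (hQ : Q = {v : V n | ∀ m, -(hk m) ≤ pair m v})
    (hksupp : ∀ m, hk m = supp Q m)
    -- h' = h - φ convex positively homogeneous, with Newton polytope Δ^{h'}
    (h' : V n → ℝ)
    (h'conv : ConvexOn ℝ Set.univ h')
    (h'hom : ∀ c : ℝ, 0 ≤ c → ∀ x, h' (c • x) = c * h' x)
    (Dh' : Set (V n)) (hDh' : Dh' = {m : V n | ∀ x, -(h' x) ≤ pair m x})
    -- the good pair (Σ̃', h̃) for (Σ', h), with h̃' = h̃ - φ̃
    (CC : Finset (Set (V n × ℝ)))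
    (hgood : IsGoodSubdiv Δ Q CC)
    (ht' : V n × ℝ → ℝ)
    (htconv : ConvexOn ℝ {p : V n × ℝ | 0 ≤ p.2} ht')
    (hthom : ∀ c : ℝ, 0 ≤ c → ∀ p : V n × ℝ, 0 ≤ p.2 → ht' (c • p) = c * ht' p)
    (htrest : ∀ x, ht' (x, 0) = h' x)
    (htlin : ∀ c ∈ CC, ∃ w : V n × ℝ, ∀ p ∈ c, ht' p = pairP p w)
    -- ∇̃ = {(n,l) | n ∈ ∇, l ≥ h'(n)} and ∇̃' = {(n,l) | n ∈ ∇^{ȟ'}, l ≥ h̃'(n,1)}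
    (Ntil Ntil' : Set (V n × ℝ))
    (hNtil : Ntil = {p : V n × ℝ | p.1 ∈ (∑ i, Nb i) ∧ h' p.1 ≤ p.2})
    (hNtil' : Ntil' = {p : V n × ℝ | p.1 ∈ Q ∧ ht' (p.1, 1) ≤ p.2})
    -- the dual function h̃̌(m,l) = -inf{⟨(m,l),(n,l')⟩ | (n,l') ∈ ∇̃ + ∇̃'},
    -- and h̃̌' = h̃̌ - φ̃̌, where φ̃̌ is the support function of ∇̃
    (htc htc' : V n × ℝ → ℝ)
    (hhtc : ∀ q, htc q = suppP (Ntil + Ntil') q)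
    (hhtc' : ∀ q, htc' q = htc q - suppP Ntil q)
    -- Δ̃' = {(m,l) | m ∈ Δ^{h'}, l ≥ h̃̌'(m,1)}
    (Δt' : Set (V n × ℝ))
    (hΔt' : Δt' = {p : V n × ℝ | p.1 ∈ Dh' ∧ htc' (p.1, 1) ≤ p.2}) :
    -- the transform applied twice recovers h̃' on the support of Σ̃'
    ∀ p : V n × ℝ, 0 ≤ p.2 → ht' p = suppP Δt' p :=
  stmt17_general Δ D E Nb hNb hk Q hQ h' h'conv h'hom Dh' hDh' CC hgood ht' htconv hthom htrest
    htlin Ntil Ntil' hNtil hNtil' htc htc' hhtc hhtc' Δt' hΔt'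

end BB
end
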